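/- If γ is in the Bohl resolvent ϱ_B(A), then the γ-exponentially stable set M_γ = {x₀ ≠ 0 : β̄_A(x₀) < γ} ∪ {0} is a linear subspace of ℝ^d. -/
import Mathlib


open Filter Topology

noncomputable section

abbrev Euc (d : ℕ) := EuclideanSpace ℝ (Fin d)

/-- forward product `A(m+k-1) ⋯ A(m)` -/
def fwd {d : ℕ} (A : ℕ → (Euc d →L[ℝ] Euc d)) (m : ℕ) : ℕ → (Euc d →L[ℝ] Euc d)
  | 0 => 1
  | k + 1 => A (m + k) * fwd A m k

/-- backward product `Ainv(n) ⋯ Ainv(n+k-1)` -/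
def bwd {d : ℕ} (Ainv : ℕ → (Euc d →L[ℝ] Euc d)) (n : ℕ) : ℕ → (Euc d →L[ℝ] Euc d)
  | 0 => 1
  | k + 1 => bwd Ainv n k * Ainv (n + k)

/-- transition matrix Φ_A(n,m) -/
def Phi {d : ℕ} (A Ainv : ℕ → (Euc d →L[ℝ] Euc d)) (n m : ℕ) : Euc d →L[ℝ] Euc d :=
  if m ≤ n then fwd A m (n - m) else bwd Ainv n (m - n)

/-- A is a bounded sequence of invertible maps with bounded inverse sequence Ainv -/
def IsLyapunov {d : ℕ} (A Ainv : ℕ → (Euc d →L[ℝ] Euc d)) : Prop :=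
  (∀ n, A n * Ainv n = 1) ∧ (∀ n, Ainv n * A n = 1) ∧
    BddAbove (Set.range fun n => ‖A n‖) ∧ BddAbove (Set.range fun n => ‖Ainv n‖)

/-- `‖A‖_∞ = sup_n ‖A(n)‖` -/
def supNorm {d : ℕ} (A : ℕ → (Euc d →L[ℝ] Euc d)) : ℝ := ⨆ n, ‖A n‖

/-- solution `x(n,x₀) = Φ_A(n,0) x₀` -/
def sol {d : ℕ} (A : ℕ → (Euc d →L[ℝ] Euc d)) (n : ℕ) (x₀ : Euc d) : Euc d :=
  fwd A 0 n x₀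

/-- `λ(n,m) = (1/(n-m)) ln (‖x(n,x₀)‖ / ‖x(m,x₀)‖)` -/
def lam {d : ℕ} (A : ℕ → (Euc d →L[ℝ] Euc d)) (n m : ℕ) (x₀ : Euc d) : ℝ :=
  Real.log (‖sol A n x₀‖ / ‖sol A m x₀‖) / ((n : ℝ) - (m : ℝ))

/-- upper Bohl exponent of a subspace -/
def upperBohl {d : ℕ} (A : ℕ → (Euc d →L[ℝ] Euc d)) (L : Set (Euc d)) : ℝ :=
  ⨅ N : ℕ, sSup {r | ∃ n m : ℕ, ∃ x₀ : Euc d,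
    N < n - m ∧ x₀ ∈ L ∧ x₀ ≠ 0 ∧ r = lam A n m x₀}

/-- lower Bohl exponent of a subspace -/
def lowerBohl {d : ℕ} (A : ℕ → (Euc d →L[ℝ] Euc d)) (L : Set (Euc d)) : ℝ :=
  ⨆ N : ℕ, sInf {r | ∃ n m : ℕ, ∃ x₀ : Euc d,
    N < n - m ∧ x₀ ∈ L ∧ x₀ ≠ 0 ∧ r = lam A n m x₀}

/-- upper Bohl exponent of a vector -/
def upperBohlVec {d : ℕ} (A : ℕ → (Euc d →L[ℝ] Euc d)) (x₀ : Euc d) : ℝ :=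
  ⨅ N : ℕ, sSup {r | ∃ n m : ℕ, N < n - m ∧ r = lam A n m x₀}

/-- lower Bohl exponent of a vector -/
def lowerBohlVec {d : ℕ} (A : ℕ → (Euc d →L[ℝ] Euc d)) (x₀ : Euc d) : ℝ :=
  ⨆ N : ℕ, sInf {r | ∃ n m : ℕ, N < n - m ∧ r = lam A n m x₀}

/-- Bohl spectrum -/
def bohlSpectrum {d : ℕ} (A : ℕ → (Euc d →L[ℝ] Euc d)) : Set ℝ :=
  {γ | ∃ x₀ : Euc d, x₀ ≠ 0 ∧ γ ∈ Set.Icc (lowerBohlVec A x₀) (upperBohlVec A x₀)}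

/-- the γ-shifted system `e^{-γ} A` -/
def shift {d : ℕ} (A : ℕ → (Euc d →L[ℝ] Euc d)) (γ : ℝ) : ℕ → (Euc d →L[ℝ] Euc d) :=
  fun n => Real.exp (-γ) • A n

/-- Bohl dichotomy on a given pair of subspaces -/
def HasBohlDichotomyOn {d : ℕ} (A : ℕ → (Euc d →L[ℝ] Euc d))
    (L₁ L₂ : Submodule ℝ (Euc d)) : Prop :=
  ∃ α : ℝ, 0 < α ∧ ∃ C₁ C₂ : Euc d → ℝ, (∀ x, 0 < C₁ x) ∧ (∀ x, 0 < C₂ x) ∧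
    (∀ x₀ ∈ L₁, ∀ m n : ℕ, m ≤ n →
      ‖sol A n x₀‖ ≤ C₁ x₀ * Real.exp (-α * ((n : ℝ) - (m : ℝ))) * ‖sol A m x₀‖) ∧
    (∀ x₀ ∈ L₂, ∀ m n : ℕ, m ≤ n →
      C₂ x₀ * Real.exp (α * ((n : ℝ) - (m : ℝ))) * ‖sol A m x₀‖ ≤ ‖sol A n x₀‖)

/-- Bohl dichotomy -/
def HasBohlDichotomy {d : ℕ} (A : ℕ → (Euc d →L[ℝ] Euc d)) : Prop :=
  ∃ L₁ L₂ : Submodule ℝ (Euc d), IsCompl L₁ L₂ ∧ HasBohlDichotomyOn A L₁ L₂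

/-- Bohl dichotomy spectrum -/
def bdSpectrum {d : ℕ} (A : ℕ → (Euc d →L[ℝ] Euc d)) : Set ℝ :=
  {γ | ¬ HasBohlDichotomy (shift A γ)}


section Aux

variable {d : ℕ} (A Ainv : ℕ → (Euc d →L[ℝ] Euc d))

lemma sol_zero' (x : Euc d) : sol A 0 x = x := by
  simp [sol, fwd]

lemma sol_succ' (n : ℕ) (x : Euc d) : sol A (n + 1) x = A n (sol A n x) := by
  simp [sol, fwd, ContinuousLinearMap.mul_apply]

lemma sol_add' (n : ℕ) (x y : Euc d) : sol A n (x + y) = sol A n x + sol A n y :=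
  (fwd A 0 n).map_add x y

lemma sol_smul' (n : ℕ) (c : ℝ) (x : Euc d) : sol A n (c • x) = c • sol A n x :=
  (fwd A 0 n).map_smul c x

lemma sol_ne_zero' (hAi : ∀ n, Ainv n * A n = 1) (n : ℕ) {x : Euc d} (hx : x ≠ 0) :
    sol A n x ≠ 0 := by
  induction n with
  | zero => simpa [sol_zero'] using hx
  | succ n ih =>
    rw [sol_succ']
    intro hz
    apply ih
    have h1 : Ainv n (A n (sol A n x)) = sol A n x := by
      rw [← ContinuousLinearMap.mul_apply, hAi n, ContinuousLinearMap.one_apply]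
    rw [← h1, hz, map_zero]

lemma sol_growth' (a : ℝ) (ha : ∀ n, ‖A n‖ ≤ a) (m k : ℕ) (x : Euc d) :
    ‖sol A (m + k) x‖ ≤ a ^ k * ‖sol A m x‖ := by
  have ha0 : 0 ≤ a := le_trans (norm_nonneg _) (ha 0)
  induction k with
  | zero => simp
  | succ k ih =>
    have hstep : sol A (m + (k + 1)) x = A (m + k) (sol A (m + k) x) := sol_succ' A (m + k) x
    rw [hstep]
    calc ‖A (m + k) (sol A (m + k) x)‖ ≤ ‖A (m + k)‖ * ‖sol A (m + k) x‖ :=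
          (A (m + k)).le_opNorm _
    _ ≤ a * (a ^ k * ‖sol A m x‖) :=
          mul_le_mul (ha _) ih (norm_nonneg _) ha0
    _ = a ^ (k + 1) * ‖sol A m x‖ := by rw [pow_succ]; ring

lemma sol_growth_inv' (hAi : ∀ n, Ainv n * A n = 1) (b : ℝ) (hb : ∀ n, ‖Ainv n‖ ≤ b)
    (m k : ℕ) (x : Euc d) : ‖sol A m x‖ ≤ b ^ k * ‖sol A (m + k) x‖ := by
  have hb0 : 0 ≤ b := le_trans (norm_nonneg _) (hb 0)
  induction k with
  | zero => simp
  | succ k ih =>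
    have hstep : ∀ j, ‖sol A j x‖ ≤ b * ‖sol A (j + 1) x‖ := by
      intro j
      have h1 : Ainv j (sol A (j + 1) x) = sol A j x := by
        rw [sol_succ', ← ContinuousLinearMap.mul_apply, hAi j, ContinuousLinearMap.one_apply]
      calc ‖sol A j x‖ = ‖Ainv j (sol A (j + 1) x)‖ := by rw [h1]
      _ ≤ ‖Ainv j‖ * ‖sol A (j + 1) x‖ := (Ainv j).le_opNorm _
      _ ≤ b * ‖sol A (j + 1) x‖ := mul_le_mul_of_nonneg_right (hb j) (norm_nonneg _)
    calc ‖sol A m x‖ ≤ b ^ k * ‖sol A (m + k) x‖ := ih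
    _ ≤ b ^ k * (b * ‖sol A (m + k + 1) x‖) :=
        mul_le_mul_of_nonneg_left (hstep _) (pow_nonneg hb0 k)
    _ = b ^ (k + 1) * ‖sol A (m + (k + 1)) x‖ := by rw [pow_succ]; ring_nf

lemma lam_le' (hAi : ∀ n, Ainv n * A n = 1) (a : ℝ) (ha : ∀ n, ‖A n‖ ≤ a)
    {x : Euc d} (hx : x ≠ 0) {m n : ℕ} (hmn : m < n) :
    lam A n m x ≤ Real.log a := by
  have hpos : ∀ j, (0:ℝ) < ‖sol A j x‖ :=
    fun j => norm_pos_iff.2 (sol_ne_zero' A Ainv hAi j hx)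
  have key : ‖sol A n x‖ ≤ a ^ (n - m) * ‖sol A m x‖ := by
    have h := sol_growth' A a ha m (n - m) x
    rwa [Nat.add_sub_cancel' hmn.le] at h
  have hr : ‖sol A n x‖ / ‖sol A m x‖ ≤ a ^ (n - m) := (div_le_iff₀ (hpos m)).2 key
  have hrpos : (0:ℝ) < ‖sol A n x‖ / ‖sol A m x‖ := div_pos (hpos n) (hpos m)
  have hlog : Real.log (‖sol A n x‖ / ‖sol A m x‖) ≤ ((n - m : ℕ) : ℝ) * Real.log a := by
    calc Real.log (‖sol A n x‖ / ‖sol A m x‖) ≤ Real.log (a ^ (n - m)) :=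
          Real.log_le_log hrpos hr
    _ = ((n - m : ℕ) : ℝ) * Real.log a := by rw [Real.log_pow]
  have hD : (0:ℝ) < (n : ℝ) - (m : ℝ) := by
    have : (m:ℝ) < n := by exact_mod_cast hmn
    linarith
  have hcast : ((n - m : ℕ) : ℝ) = (n : ℝ) - (m : ℝ) := by
    push_cast [Nat.cast_sub hmn.le]; ring
  unfold lam
  rw [div_le_iff₀ hD]
  rw [hcast] at hlog
  linarith [hlog]

lemma lam_ge' (hAi : ∀ n, Ainv n * A n = 1) (b : ℝ) (hb : ∀ n, ‖Ainv n‖ ≤ b)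
    (hb1 : 1 ≤ b) {x : Euc d} (hx : x ≠ 0) {m n : ℕ} (hmn : m < n) :
    -Real.log b ≤ lam A n m x := by
  have hpos : ∀ j, (0:ℝ) < ‖sol A j x‖ :=
    fun j => norm_pos_iff.2 (sol_ne_zero' A Ainv hAi j hx)
  have hb0 : (0:ℝ) < b := lt_of_lt_of_le one_pos hb1
  have key : ‖sol A m x‖ ≤ b ^ (n - m) * ‖sol A n x‖ := by
    have h := sol_growth_inv' A Ainv hAi b hb m (n - m) x
    rwa [Nat.add_sub_cancel' hmn.le] at h
  have hbk : (0:ℝ) < b ^ (n - m) := pow_pos hb0 _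
  have hr : (b ^ (n - m))⁻¹ ≤ ‖sol A n x‖ / ‖sol A m x‖ := by
    rw [inv_le_iff_one_le_mul₀ hbk] at *
    · rw [div_mul_eq_mul_div, le_div_iff₀ (hpos m), one_mul, mul_comm]
      exact key
  have hlog : -(((n - m : ℕ) : ℝ) * Real.log b) ≤ Real.log (‖sol A n x‖ / ‖sol A m x‖) := by
    calc -(((n - m : ℕ) : ℝ) * Real.log b) = Real.log ((b ^ (n - m))⁻¹) := by
          rw [Real.log_inv, Real.log_pow]
    _ ≤ Real.log (‖sol A n x‖ / ‖sol A m x‖) :=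
          Real.log_le_log (by positivity) hr
  have hD : (0:ℝ) < (n : ℝ) - (m : ℝ) := by
    have : (m:ℝ) < n := by exact_mod_cast hmn
    linarith
  have hcast : ((n - m : ℕ) : ℝ) = (n : ℝ) - (m : ℝ) := by
    push_cast [Nat.cast_sub hmn.le]; ring
  unfold lam
  rw [le_div_iff₀ hD]
  rw [hcast] at hlog
  linarith [hlog]

lemma upper_decay' (hAi : ∀ n, Ainv n * A n = 1) (a : ℝ) (ha : ∀ n, ‖A n‖ ≤ a)
    {γ : ℝ} {x : Euc d} (hx : x ≠ 0) (h : upperBohlVec A x < γ) :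
    ∃ N : ℕ, ∀ n : ℕ, N < n → ‖sol A n x‖ < Real.exp (γ * n) * ‖x‖ := by
  obtain ⟨N, hN⟩ := exists_lt_of_ciInf_lt h
  refine ⟨N, fun n hn => ?_⟩
  have hbdd : BddAbove {r | ∃ n m : ℕ, N < n - m ∧ r = lam A n m x} := by
    refine ⟨Real.log a, fun r hr => ?_⟩
    obtain ⟨n', m', hnm, rfl⟩ := hr
    exact lam_le' A Ainv hAi a ha hx (by omega)
  have hmem : lam A n 0 x ∈ {r | ∃ n m : ℕ, N < n - m ∧ r = lam A n m x} :=
    ⟨n, 0, by simpa using hn, rfl⟩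
  have hlt : lam A n 0 x < γ := lt_of_le_of_lt (le_csSup hbdd hmem) hN
  have hpos_n : (0:ℝ) < ‖sol A n x‖ := norm_pos_iff.2 (sol_ne_zero' A Ainv hAi n hx)
  have hpos_0 : (0:ℝ) < ‖x‖ := norm_pos_iff.2 hx
  have hn0 : (0:ℝ) < (n:ℝ) := by exact_mod_cast Nat.pos_of_ne_zero (by omega)
  unfold lam at hlt
  rw [sol_zero'] at hlt
  have hlt2 : Real.log (‖sol A n x‖ / ‖x‖) < γ * (n:ℝ) := by
    rw [div_lt_iff₀ (by push_cast; simpa using hn0)] at hlt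
    push_cast at hlt
    linarith
  have := (Real.log_lt_iff_lt_exp (div_pos hpos_n hpos_0)).1 hlt2
  rw [div_lt_iff₀ hpos_0] at this
  linarith [this]

lemma lower_growth' (hAi : ∀ n, Ainv n * A n = 1) (b : ℝ) (hb : ∀ n, ‖Ainv n‖ ≤ b)
    (hb1 : 1 ≤ b) {γ : ℝ} {x : Euc d} (hx : x ≠ 0) (h : γ < lowerBohlVec A x) :
    ∃ N : ℕ, ∃ c' : ℝ, γ < c' ∧
      ∀ n : ℕ, N < n → Real.exp (c' * n) * ‖x‖ ≤ ‖sol A n x‖ := by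
  obtain ⟨N, hN⟩ := exists_lt_of_lt_ciSup h
  refine ⟨N, sInf {r | ∃ n m : ℕ, N < n - m ∧ r = lam A n m x}, hN, fun n hn => ?_⟩
  have hbdd : BddBelow {r | ∃ n m : ℕ, N < n - m ∧ r = lam A n m x} := by
    refine ⟨-Real.log b, fun r hr => ?_⟩
    obtain ⟨n', m', hnm, rfl⟩ := hr
    exact lam_ge' A Ainv hAi b hb hb1 hx (by omega)
  have hmem : lam A n 0 x ∈ {r | ∃ n m : ℕ, N < n - m ∧ r = lam A n m x} :=
    ⟨n, 0, by simpa using hn, rfl⟩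
  have hle : sInf {r | ∃ n m : ℕ, N < n - m ∧ r = lam A n m x} ≤ lam A n 0 x :=
    csInf_le hbdd hmem
  set c' := sInf {r | ∃ n m : ℕ, N < n - m ∧ r = lam A n m x}
  have hpos_n : (0:ℝ) < ‖sol A n x‖ := norm_pos_iff.2 (sol_ne_zero' A Ainv hAi n hx)
  have hpos_0 : (0:ℝ) < ‖x‖ := norm_pos_iff.2 hx
  have hn0 : (0:ℝ) < (n:ℝ) := by exact_mod_cast Nat.pos_of_ne_zero (by omega)
  unfold lam at hle
  rw [sol_zero'] at hle
  have hle2 : c' * (n:ℝ) ≤ Real.log (‖sol A n x‖ / ‖x‖) := by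
    rw [le_div_iff₀ (by push_cast; simpa using hn0)] at hle
    push_cast at hle
    linarith
  have := (Real.le_log_iff_exp_le (div_pos hpos_n hpos_0)).1 hle2
  rw [le_div_iff₀ hpos_0] at this
  linarith [this]

lemma upperBohlVec_smul' {c : ℝ} (hc : c ≠ 0) (x : Euc d) :
    upperBohlVec A (c • x) = upperBohlVec A x := by
  have h : ∀ n m : ℕ, lam A n m (c • x) = lam A n m x := by
    intro n m
    unfold lam
    rw [sol_smul', sol_smul', norm_smul, norm_smul,
      mul_div_mul_left _ _ (norm_ne_zero_iff.2 hc)]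
  unfold upperBohlVec
  simp_rw [h]

end Aux

theorem stmt12 {d : ℕ} (A Ainv : ℕ → (Euc d →L[ℝ] Euc d)) (hA : IsLyapunov A Ainv)
    (γ : ℝ) (hγ : γ ∉ bohlSpectrum A) :
    ∃ p : Submodule ℝ (Euc d),
      (p : Set (Euc d)) = {x₀ : Euc d | x₀ ≠ 0 ∧ upperBohlVec A x₀ < γ} ∪ {0} := by
  obtain ⟨hAAi, hAiA, hbA, hbAi⟩ := hA
  obtain ⟨M, hM⟩ := hbA
  obtain ⟨M', hM'⟩ := hbAi
  set a : ℝ := max M 1 with ha_def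
  set b : ℝ := max M' 1 with hb_def
  have ha : ∀ n, ‖A n‖ ≤ a := fun n => le_trans (hM (Set.mem_range_self n)) (le_max_left _ _)
  have hb : ∀ n, ‖Ainv n‖ ≤ b := fun n => le_trans (hM' (Set.mem_range_self n)) (le_max_left _ _)
  have hb1 : (1:ℝ) ≤ b := le_max_right _ _
  refine ⟨⟨⟨⟨{x₀ : Euc d | x₀ ≠ 0 ∧ upperBohlVec A x₀ < γ} ∪ {0}, ?_⟩, Or.inr rfl⟩, ?_⟩, rfl⟩
  · rintro x y (⟨hx0, hxu⟩ | hx0) (⟨hy0, hyu⟩ | hy0)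
    · by_cases hxy : x + y = 0
      · exact Or.inr hxy
      refine Or.inl ⟨hxy, ?_⟩
      by_contra hu
      push_neg at hu
      have hl : γ < lowerBohlVec A (x + y) := by
        by_contra hl
        push_neg at hl
        exact hγ ⟨x + y, hxy, hl, hu⟩
      obtain ⟨N₁, h₁⟩ := upper_decay' A Ainv hAiA a ha hx0 hxu
      obtain ⟨N₂, h₂⟩ := upper_decay' A Ainv hAiA a ha hy0 hyu
      obtain ⟨N₃, c', hc', h₃⟩ := lower_growth' A Ainv hAiA b hb hb1 hxy hl
      have hzpos : (0:ℝ) < ‖x + y‖ := norm_pos_iff.2 hxy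
      set R : ℝ := (‖x‖ + ‖y‖) / ‖x + y‖ with hR
      obtain ⟨n₀, hn₀⟩ := exists_nat_gt (R / (c' - γ))
      set n : ℕ := max n₀ (max N₁ (max N₂ N₃)) + 1 with hn_def
      have hn1 : N₁ < n := by omega
      have hn2 : N₂ < n := by omega
      have hn3 : N₃ < n := by omega
      have hnn0 : R / (c' - γ) < (n:ℝ) := by
        have : (n₀:ℝ) ≤ (n:ℝ) := by exact_mod_cast (by omega : n₀ ≤ n)
        linarith
      have hxn := h₁ n hn1
      have hyn := h₂ n hn2
      have hzn := h₃ n hn3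
      have htri : ‖sol A n (x + y)‖ ≤ ‖sol A n x‖ + ‖sol A n y‖ := by
        rw [sol_add']; exact norm_add_le _ _
      have hchain : Real.exp (c' * n) * ‖x + y‖ <
          Real.exp (γ * n) * (‖x‖ + ‖y‖) := by
        calc Real.exp (c' * n) * ‖x + y‖ ≤ ‖sol A n (x + y)‖ := hzn
        _ ≤ ‖sol A n x‖ + ‖sol A n y‖ := htri
        _ < Real.exp (γ * n) * ‖x‖ + Real.exp (γ * n) * ‖y‖ := add_lt_add hxn hyn
        _ = Real.exp (γ * n) * (‖x‖ + ‖y‖) := by ring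
      have hexp : Real.exp (c' * n) = Real.exp (γ * n) * Real.exp ((c' - γ) * n) := by
        rw [← Real.exp_add]; ring_nf
      have hgpos : (0:ℝ) < Real.exp (γ * n) := Real.exp_pos _
      have hkey : Real.exp ((c' - γ) * n) * ‖x + y‖ < ‖x‖ + ‖y‖ := by
        rw [hexp] at hchain
        nlinarith [hgpos]
      have hRlt : R < (c' - γ) * n := by
        rw [div_lt_iff₀ (by linarith : (0:ℝ) < c' - γ)] at hnn0
        linarith [hnn0]
      have hexp_ge : (c' - γ) * n < Real.exp ((c' - γ) * n) := by
        have := Real.add_one_le_exp ((c' - γ) * n)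
        linarith
      have hRmul : R * ‖x + y‖ = ‖x‖ + ‖y‖ := div_mul_cancel₀ _ (ne_of_gt hzpos)
      nlinarith [hkey, hRlt, hexp_ge, hzpos]
    · rw [hy0, add_zero]; exact Or.inl ⟨hx0, hxu⟩
    · rw [hx0, zero_add]; exact Or.inl ⟨hy0, hyu⟩
    · rw [hx0, hy0, add_zero]; exact Or.inr rfl
  · rintro c x (⟨hx0, hxu⟩ | hx0)
    · by_cases hc : c = 0
      · subst hc; simp only [zero_smul]; exact Or.inr rfl
      · exact Or.inl ⟨smul_ne_zero hc hx0, by rw [upperBohlVec_smul' A hc]; exact hxu⟩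
    · rw [hx0, smul_zero]; exact Or.inr rfl
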